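/- arXiv:0806.4034 — 2 statements merged into one kernel-verified Lean document; each statement's English description precedes it below -/
import Mathlib

section
/- For every closed DLA term L, there exists a basic term L' such that the equation L = L' is derivable from the axioms of DLA (by equational logic). -/
/-- Closed terms of Data Linkage Algebra (DLA), parameterized by the sets
`S` of spots, `F` of fields, `A` of atomic objects and `V` of values. -/
inductive DLATerm (S F A V : Type) : Type
  | empty : DLATerm S F A V
  | slink : S → A → DLATerm S F A V
  | pflink : A → F → DLATerm S F A V
  | flink : A → F → A → DLATerm S F A V
  | valass : A → V → DLATerm S F A V
  | plus : DLATerm S F A V → DLATerm S F A V → DLATerm S F A V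
  | ovr : DLATerm S F A V → DLATerm S F A V → DLATerm S F A V

namespace DLATerm

variable {S F A V : Type}

/-- The atomic constants of DLA: spot links, partial field links, field links
and value associations. -/
inductive IsAtomic : DLATerm S F A V → Prop
  | slink (s : S) (a : A) : IsAtomic (slink s a)
  | pflink (a : A) (f : F) : IsAtomic (pflink a f)
  | flink (a : A) (f : F) (b : A) : IsAtomic (flink a f b)
  | valass (a : A) (n : V) : IsAtomic (valass a n)

/-- Two atomic constants are clashing if they are two spot links via the same
spot, two (partial) field links from the same atomic object via the same
field, or two value associations with the same atomic object. -/
inductive Clashing : DLATerm S F A V → DLATerm S F A V → Prop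
  | slink (s : S) (a b : A) : Clashing (slink s a) (slink s b)
  | pf_pf (a : A) (f : F) : Clashing (pflink a f) (pflink a f)
  | pf_fl (a : A) (f : F) (b : A) : Clashing (pflink a f) (flink a f b)
  | fl_pf (a : A) (f : F) (b : A) : Clashing (flink a f b) (pflink a f)
  | fl_fl (a : A) (f : F) (b c : A) : Clashing (flink a f b) (flink a f c)
  | valass (a : A) (n m : V) : Clashing (valass a n) (valass a m)

/-- Derivability of an equation between closed DLA terms from the axioms of
DLA by equational logic. -/
inductive Derivable : DLATerm S F A V → DLATerm S F A V → Prop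
  | refl (x) : Derivable x x
  | symm {x y} : Derivable x y → Derivable y x
  | trans {x y z} : Derivable x y → Derivable y z → Derivable x z
  | plus_congr {x x' y y'} : Derivable x x' → Derivable y y' →
      Derivable (plus x y) (plus x' y')
  | ovr_congr {x x' y y'} : Derivable x x' → Derivable y y' →
      Derivable (ovr x y) (ovr x' y')
  -- X + Y = Y + X
  | plus_comm (x y) : Derivable (plus x y) (plus y x)
  -- X + (Y + Z) = (X + Y) + Z
  | plus_assoc (x y z) : Derivable (plus x (plus y z)) (plus (plus x y) z)
  -- X + X = X
  | plus_idem (x) : Derivable (plus x x) x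
  -- X + ∅ = X
  | plus_empty (x) : Derivable (plus x empty) x
  -- ∅ ⊕ X = X
  | empty_ovr (x) : Derivable (ovr empty x) x
  -- X ⊕ ∅ = X
  | ovr_empty (x) : Derivable (ovr x empty) x
  -- X ⊕ (Y + Z) = (X ⊕ Y) + (X ⊕ Z)
  | ovr_plus (x y z) : Derivable (ovr x (plus y z)) (plus (ovr x y) (ovr x z))
  -- (X + u) ⊕ v = X ⊕ v for clashing atomic constants u, v
  | clash (x : DLATerm S F A V) {u v : DLATerm S F A V} :
      IsAtomic u → IsAtomic v → Clashing u v →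
      Derivable (ovr (plus x u) v) (ovr x v)
  -- (X + u) ⊕ v = (X ⊕ v) + u for non-clashing atomic constants u, v
  | noclash (x : DLATerm S F A V) {u v : DLATerm S F A V} :
      IsAtomic u → IsAtomic v → ¬ Clashing u v →
      Derivable (ovr (plus x u) v) (plus (ovr x v) u)

/-- Basic terms: built from `empty` and the atomic constants using only `plus`. -/
inductive IsBasic : DLATerm S F A V → Prop
  | empty : IsBasic empty
  | atom {u : DLATerm S F A V} : IsAtomic u → IsBasic u
  | plus {x y : DLATerm S F A V} : IsBasic x → IsBasic y → IsBasic (plus x y)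

end DLATerm

/-! Induct on `L`. Sums of basic terms are basic; for `X ⊕ Y` with `X`, `Y` basic, rewrite `X`
as a left-nested sum of atoms, distribute over the summands of `Y` by `X ⊕ (Y + Z) = …`, and
compute `X ⊕ v` for an atom `v` by removing the atoms of `X` one by one with the clashing and
non-clashing axioms. -/

namespace DLATerm

variable {S F A V : Type}

/-- Left-nested sums `((∅ + u₁) + u₂) + ⋯ + uₙ` of atoms: the shape on which the axioms
`(X + u) ⊕ v = …` can peel off one atom after another. -/
inductive IsFlat : DLATerm S F A V → Prop
  | empty : IsFlat empty
  | plus {x u : DLATerm S F A V} : IsFlat x → IsAtomic u → IsFlat (plus x u)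

theorem IsFlat.isBasic {x : DLATerm S F A V} (hx : IsFlat x) : IsBasic x := by
  induction hx with
  | empty => exact .empty
  | plus _ hu ih => exact .plus ih (.atom hu)

theorem IsFlat.exists_derivable_plus {x y : DLATerm S F A V} (hx : IsFlat x) (hy : IsFlat y) :
    ∃ z, IsFlat z ∧ Derivable (.plus x y) z := by
  induction hy with
  | empty => exact ⟨x, hx, .plus_empty x⟩
  | @plus y u _ hu ih =>
    obtain ⟨z, hz, hxy⟩ := ih
    exact ⟨.plus z u, hz.plus hu, (Derivable.plus_assoc x y u).trans (hxy.plus_congr (.refl u))⟩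

theorem IsBasic.exists_flat {x : DLATerm S F A V} (hx : IsBasic x) :
    ∃ z, IsFlat z ∧ Derivable x z := by
  induction hx with
  | empty => exact ⟨.empty, .empty, .refl _⟩
  | @atom u hu =>
    exact ⟨.plus .empty u, IsFlat.empty.plus hu,
      (Derivable.plus_empty u).symm.trans (.plus_comm u .empty)⟩
  | plus _ _ ihx ihy =>
    obtain ⟨x', hx', hxx'⟩ := ihx
    obtain ⟨y', hy', hyy'⟩ := ihy
    obtain ⟨z, hz, hx'y'⟩ := hx'.exists_derivable_plus hy'
    exact ⟨z, hz, (hxx'.plus_congr hyy').trans hx'y'⟩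

theorem IsFlat.exists_basic_ovr_atom {x v : DLATerm S F A V} (hx : IsFlat x)
    (hv : IsAtomic v) : ∃ w, IsBasic w ∧ Derivable (ovr x v) w := by
  classical
  induction hx with
  | empty => exact ⟨v, .atom hv, .empty_ovr v⟩
  | @plus x u _ hu ih =>
    obtain ⟨w, hw, hxv⟩ := ih
    by_cases huv : Clashing u v
    · exact ⟨w, hw, (Derivable.clash x hu hv huv).trans hxv⟩
    · exact ⟨.plus w u, hw.plus (.atom hu),
        (Derivable.noclash x hu hv huv).trans (hxv.plus_congr (.refl u))⟩

theorem IsFlat.exists_basic_ovr {x y : DLATerm S F A V} (hx : IsFlat x) (hy : IsBasic y) :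
    ∃ w, IsBasic w ∧ Derivable (ovr x y) w := by
  induction hy with
  | empty => exact ⟨x, hx.isBasic, .ovr_empty x⟩
  | atom hv => exact hx.exists_basic_ovr_atom hv
  | plus _ _ ih₁ ih₂ =>
    obtain ⟨w₁, hw₁, h₁⟩ := ih₁
    obtain ⟨w₂, hw₂, h₂⟩ := ih₂
    exact ⟨.plus w₁ w₂, hw₁.plus hw₂, (Derivable.ovr_plus _ _ _).trans (h₁.plus_congr h₂)⟩

end DLATerm

theorem dla_elimination_general {S F A V : Type}
    (L : DLATerm S F A V) :
    ∃ L' : DLATerm S F A V, L'.IsBasic ∧ DLATerm.Derivable L L' := by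
  induction L with
  | empty => exact ⟨_, .empty, .refl _⟩
  | slink s a => exact ⟨_, .atom (.slink s a), .refl _⟩
  | pflink a f => exact ⟨_, .atom (.pflink a f), .refl _⟩
  | flink a f b => exact ⟨_, .atom (.flink a f b), .refl _⟩
  | valass a n => exact ⟨_, .atom (.valass a n), .refl _⟩
  | plus x y ihx ihy =>
    obtain ⟨x', hx', hxx'⟩ := ihx
    obtain ⟨y', hy', hyy'⟩ := ihy
    exact ⟨.plus x' y', hx'.plus hy', hxx'.plus_congr hyy'⟩
  | ovr x y ihx ihy =>
    obtain ⟨x', hx', hxx'⟩ := ihx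
    obtain ⟨y', hy', hyy'⟩ := ihy
    obtain ⟨z, hz, hx'z⟩ := hx'.exists_flat
    obtain ⟨w, hw, hzy'⟩ := hz.exists_basic_ovr hy'
    exact ⟨w, hw, ((hxx'.trans hx'z).ovr_congr hyy').trans hzy'⟩

/-- **Elimination theorem for DLA** (Theorem 1): for every closed DLA term `L`
there is a basic term `L'` such that `L = L'` is derivable from the axioms of
DLA. -/
theorem dla_elimination {S F A V : Type} [Fintype S] [Fintype F] [Fintype A] [Fintype V]
    (L : DLATerm S F A V) :
    ∃ L' : DLATerm S F A V, L'.IsBasic ∧ DLATerm.Derivable L L' :=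
  dla_elimination_general L
end

section
/- For every basic term L of DLA and every atomic constant u (a spot link, partial field link, field link, or value association), there exists a basic term L' such that the equation L OVR u = L' is derivable from the axioms of DLA. -/
open DLATerm in
theorem dla_aux {S F A V : Type} {L u : DLATerm S F A V} (hL : L.IsBasic) (hu : u.IsAtomic) :
    ∃ L' : DLATerm S F A V, L'.IsBasic ∧
      ∀ X : DLATerm S F A V, Derivable ((X.plus L).ovr u) ((X.ovr u).plus L') := by
  induction hL with
  | empty =>
      exact ⟨.empty, .empty, fun X =>
        .trans (.ovr_congr (.plus_empty X) (.refl u)) (.symm (.plus_empty _))⟩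
  | @atom v hv =>
      rcases Classical.em (Clashing v u) with hcl | hcl
      · exact ⟨.empty, .empty, fun X =>
          .trans (.clash X hv hu hcl) (.symm (.plus_empty _))⟩
      · exact ⟨v, .atom hv, fun X => .noclash X hv hu hcl⟩
  | @plus y z _ _ ihy ihz =>
      obtain ⟨Y', hY, dY⟩ := ihy
      obtain ⟨Z', hZ, dZ⟩ := ihz
      refine ⟨Y'.plus Z', .plus hY hZ, fun X => ?_⟩
      exact .trans (.ovr_congr (.plus_assoc X y z) (.refl u))
        (.trans (dZ (X.plus y))
          (.trans (.plus_congr (dY X) (.refl Z')) (.symm (.plus_assoc _ _ _))))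

/-- For every basic term `L` of DLA and every atomic constant `u`, there is a
basic term `L'` such that `L ⊕ u = L'` is derivable from the axioms of DLA. -/
theorem dla_ovr_atom_basic {S F A V : Type} [Fintype S] [Fintype F] [Fintype A] [Fintype V]
    (L u : DLATerm S F A V) (hL : L.IsBasic) (hu : u.IsAtomic) :
    ∃ L' : DLATerm S F A V, L'.IsBasic ∧ DLATerm.Derivable (L.ovr u) L' := by
  obtain ⟨L', hL', d⟩ := dla_aux hL hu
  refine ⟨u.plus L', .plus (.atom hu) hL', ?_⟩
  exact .trans
    (.ovr_congr (.symm (.trans (.plus_comm .empty L) (.plus_empty L))) (.refl u))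
    (.trans (d .empty) (.plus_congr (.empty_ovr u) (.refl L')))
end
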